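/- Let H be a hierarchical measurement operator built from a mixing matrix A ∈ K^{M×N} and block matrices B_i ∈ K^{m×n_i} (i = 1,…,N). Suppose each B_i has σ_i-RIP constant δ_{σ_i}(B_i) and A has s-RIP constant δ_s(A). Then H obeys the hierarchical restricted isometry property with (s,σ)-HiRIP constant satisfying δ_{(s,σ)}(H) ≤ δ_s(A) + sup_i δ_{σ_i}(B_i) + δ_s(A) · sup_i δ_{σ_i}(B_i), where σ = (σ_1,…,σ_N). -/
import Mathlib


/-!
Hierarchical measurement operators and the HiRIP (Theorem 1 of the paper).
`𝕜` plays the role of the field `K ∈ {ℝ, ℂ}`.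
-/

open Finset
open scoped BigOperators

variable {𝕜 : Type*} [RCLike 𝕜]

/-- Squared ℓ²-norm of a vector. -/
def normSq {ι : Type*} [Fintype ι] (v : ι → 𝕜) : ℝ := ∑ j, ‖v j‖ ^ 2

/-- A vector is `k`-sparse if it has at most `k` nonzero entries. -/
def IsSparse {n : ℕ} (k : ℕ) (v : Fin n → 𝕜) : Prop := {j | v j ≠ 0}.ncard ≤ k

/-- `x = (x_1, …, x_N)` is `(s, σ)`-hierarchically sparse: at most `s` blocks are
nonzero and each (nonzero) block `x i` has at most `σ i` nonzero entries. -/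
def IsHiSparse {N : ℕ} {n : Fin N → ℕ} (s : ℕ) (σ : Fin N → ℕ)
    (x : ∀ i, Fin (n i) → 𝕜) : Prop :=
  {i | x i ≠ 0}.ncard ≤ s ∧ ∀ i, IsSparse (σ i) (x i)

/-- The `k`-RIP constant `δ_k(M)` of a matrix `M`: the smallest `δ ≥ 0` such that
`(1-δ)‖v‖² ≤ ‖Mv‖² ≤ (1+δ)‖v‖²` for all `k`-sparse `v`. -/
noncomputable def ripConst {m n : ℕ} (M : Matrix (Fin m) (Fin n) 𝕜) (k : ℕ) : ℝ :=
  sInf {δ : ℝ | 0 ≤ δ ∧ ∀ v : Fin n → 𝕜, IsSparse k v →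
    (1 - δ) * normSq v ≤ normSq (M.mulVec v) ∧ normSq (M.mulVec v) ≤ (1 + δ) * normSq v}

/-- The `(s, σ)`-HiRIP constant of a (not necessarily linear) map `T` on block vectors:
the smallest `δ ≥ 0` such that `(1-δ)‖x‖² ≤ ‖Tx‖² ≤ (1+δ)‖x‖²` for all
`(s, σ)`-hierarchically sparse `x`. -/
noncomputable def hiripConst {N : ℕ} {n : Fin N → ℕ} {ι : Type*} [Fintype ι]
    (T : (∀ i, Fin (n i) → 𝕜) → ι → 𝕜) (s : ℕ) (σ : Fin N → ℕ) : ℝ :=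
  sInf {δ : ℝ | 0 ≤ δ ∧ ∀ x : ∀ i, Fin (n i) → 𝕜, IsHiSparse s σ x →
    (1 - δ) * (∑ i, normSq (x i)) ≤ normSq (T x) ∧
      normSq (T x) ≤ (1 + δ) * (∑ i, normSq (x i))}

/-- The hierarchical measurement operator `H(x_1,…,x_N) = ∑ i, a_i ⊗ (B_i x_i)`,
built from a mixing matrix `A` (with columns `a_i`) and block matrices `B_i`.
The output is indexed by `Fin M × Fin m`, i.e. `(a ⊗ v) (j, l) = a j * v l`. -/
def hierOp {M N m : ℕ} {n : Fin N → ℕ} (A : Matrix (Fin M) (Fin N) 𝕜)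
    (B : ∀ i, Matrix (Fin m) (Fin (n i)) 𝕜) (x : ∀ i, Fin (n i) → 𝕜) :
    Fin M × Fin m → 𝕜 :=
  fun p => ∑ i, A p.1 i * (B i).mulVec (x i) p.2

lemma normSq_nonneg' {ι : Type*} [Fintype ι] (v : ι → 𝕜) : 0 ≤ normSq v :=
  Finset.sum_nonneg fun _ _ => by positivity

lemma normSq_eq_zero' {ι : Type*} [Fintype ι] {v : ι → 𝕜} (h : normSq v = 0) : v = 0 := by
  funext j
  have := (Finset.sum_eq_zero_iff_of_nonneg (fun i (_ : i ∈ Finset.univ) => by positivity)).1 h j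
    (mem_univ j)
  simpa using this

lemma normSq_mulVec_le {m n : ℕ} (M : Matrix (Fin m) (Fin n) 𝕜) (v : Fin n → 𝕜) :
    normSq (M.mulVec v) ≤ (∑ i, ∑ j, ‖M i j‖ ^ 2) * normSq v := by
  unfold normSq
  rw [Finset.sum_mul]
  apply Finset.sum_le_sum
  intro i _
  have h1 : M.mulVec v i = ∑ j, M i j * v j := rfl
  calc ‖M.mulVec v i‖ ^ 2 ≤ (∑ j, ‖M i j‖ * ‖v j‖) ^ 2 := by
        apply pow_le_pow_left₀ (norm_nonneg _)
        rw [h1]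
        exact (norm_sum_le _ _).trans (le_of_eq (Finset.sum_congr rfl fun j _ => norm_mul _ _))
    _ ≤ (∑ j, ‖M i j‖ ^ 2) * ∑ j, ‖v j‖ ^ 2 :=
        Finset.sum_mul_sq_le_sq_mul_sq _ _ _

/-- The defining set of `ripConst` is nonempty. -/
lemma ripSet_nonempty {m n : ℕ} (M : Matrix (Fin m) (Fin n) 𝕜) (k : ℕ) :
    {δ : ℝ | 0 ≤ δ ∧ ∀ v : Fin n → 𝕜, IsSparse k v →
      (1 - δ) * normSq v ≤ normSq (M.mulVec v) ∧
        normSq (M.mulVec v) ≤ (1 + δ) * normSq v}.Nonempty := by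
  set C : ℝ := ∑ i, ∑ j, ‖M i j‖ ^ 2 with hC
  have hC0 : 0 ≤ C := Finset.sum_nonneg fun _ _ => Finset.sum_nonneg fun _ _ => by positivity
  refine ⟨1 + C, by linarith, fun v _ => ⟨?_, ?_⟩⟩
  · have := normSq_nonneg' v
    have := normSq_nonneg' (M.mulVec v)
    nlinarith
  · have h := normSq_mulVec_le M v
    have := normSq_nonneg' v
    nlinarith

lemma ripConst_nonneg {m n : ℕ} (M : Matrix (Fin m) (Fin n) 𝕜) (k : ℕ) :
    0 ≤ ripConst M k :=
  le_csInf (ripSet_nonempty M k) fun _ hδ => hδ.1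

/-- The RIP constant itself satisfies the RIP inequalities. -/
lemma ripConst_spec {m n : ℕ} (M : Matrix (Fin m) (Fin n) 𝕜) (k : ℕ)
    {v : Fin n → 𝕜} (hv : IsSparse k v) :
    (1 - ripConst M k) * normSq v ≤ normSq (M.mulVec v) ∧
      normSq (M.mulVec v) ≤ (1 + ripConst M k) * normSq v := by
  set c := ripConst M k with hc
  by_cases h0 : normSq v = 0
  · have hv0 : v = 0 := normSq_eq_zero' h0
    have hMv : normSq (M.mulVec v) = 0 := by
      rw [hv0]
      simp [normSq, Matrix.mulVec_zero]
    rw [h0, hMv]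
    simp
  · have hp : 0 < normSq v := lt_of_le_of_ne (normSq_nonneg' v) (Ne.symm h0)
    have hle : ∀ r : ℝ, (∀ δ ∈ {δ : ℝ | 0 ≤ δ ∧ ∀ w : Fin n → 𝕜, IsSparse k w →
        (1 - δ) * normSq w ≤ normSq (M.mulVec w) ∧
          normSq (M.mulVec w) ≤ (1 + δ) * normSq w}, r ≤ δ) → r ≤ c :=
      fun r h => le_csInf (ripSet_nonempty M k) h
    have h1 : (normSq (M.mulVec v) - normSq v) / normSq v ≤ c := by
      apply hle
      intro δ hδ
      rw [div_le_iff₀ hp]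
      have := (hδ.2 v hv).2
      nlinarith
    have h2 : (normSq v - normSq (M.mulVec v)) / normSq v ≤ c := by
      apply hle
      intro δ hδ
      rw [div_le_iff₀ hp]
      have := (hδ.2 v hv).1
      nlinarith
    rw [div_le_iff₀ hp] at h1 h2
    constructor <;> nlinarith

/-- **Theorem 1.** If every block matrix `B i` has `σ i`-RIP constant
`δ_{σ i}(B i)` and the mixing matrix `A` has `s`-RIP constant `δ_s(A)`, then the
hierarchical measurement operator `H` built from `A` and the `B i` obeys the
HiRIP with
`δ_{(s,σ)}(H) ≤ δ_s(A) + sup_i δ_{σ i}(B i) + δ_s(A) * sup_i δ_{σ i}(B i)`. -/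
theorem hiripConst_hierOp_le {M N m : ℕ} {n : Fin N → ℕ}
    (A : Matrix (Fin M) (Fin N) 𝕜) (B : ∀ i, Matrix (Fin m) (Fin (n i)) 𝕜)
    (s : ℕ) (σ : Fin N → ℕ) :
    hiripConst (hierOp A B) s σ ≤
      ripConst A s + (⨆ i, ripConst (B i) (σ i)) +
        ripConst A s * ⨆ i, ripConst (B i) (σ i) := by
  set δA := ripConst A s with hδA
  set δB := ⨆ i, ripConst (B i) (σ i) with hδB
  have hA0 : 0 ≤ δA := ripConst_nonneg A s
  have hB0 : 0 ≤ δB := Real.iSup_nonneg fun i => ripConst_nonneg (B i) (σ i)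
  have hBle : ∀ i, ripConst (B i) (σ i) ≤ δB := fun i =>
    le_ciSup (f := fun i => ripConst (B i) (σ i)) (Set.Finite.bddAbove (Set.finite_range _)) i
  set c := δA + δB + δA * δB with hcdef
  have hc0 : 0 ≤ c := by positivity
  apply csInf_le ⟨0, fun δ hδ => hδ.1⟩
  refine ⟨hc0, fun x hx => ?_⟩
  -- the columns of the "intermediate" matrix
  set w : Fin m → Fin N → 𝕜 := fun l i => (B i).mulVec (x i) l with hw
  have hkey : normSq (hierOp A B x) = ∑ l, normSq (A.mulVec (w l)) := by
    unfold normSq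
    rw [Fintype.sum_prod_type, Finset.sum_comm]
    rfl
  have hkey2 : ∑ l, normSq (w l) = ∑ i, normSq ((B i).mulVec (x i)) := by
    unfold normSq
    rw [Finset.sum_comm]
  have hsw : ∀ l, IsSparse s (w l) := by
    intro l
    refine le_trans (Set.ncard_le_ncard ?_ (Set.toFinite _)) hx.1
    intro i hi
    simp only [Set.mem_setOf_eq] at hi ⊢
    intro hxi
    apply hi
    simp [hw, hxi, Matrix.mulVec_zero]
  set nx := ∑ i, normSq (x i) with hnxdef
  have hnx : 0 ≤ nx := Finset.sum_nonneg fun i _ => normSq_nonneg' (x i)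
  set S := ∑ i, normSq ((B i).mulVec (x i)) with hSdef
  have hS0 : 0 ≤ S := Finset.sum_nonneg fun i _ => normSq_nonneg' _
  have sum1 : normSq (hierOp A B x) ≤ (1 + δA) * S := by
    rw [hkey, ← hkey2, Finset.mul_sum]
    exact Finset.sum_le_sum fun l _ => (ripConst_spec A s (hsw l)).2
  have sum2 : (1 - δA) * S ≤ normSq (hierOp A B x) := by
    rw [hkey, ← hkey2, Finset.mul_sum]
    exact Finset.sum_le_sum fun l _ => (ripConst_spec A s (hsw l)).1
  have sumB_up : S ≤ (1 + δB) * nx := by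
    rw [Finset.mul_sum]
    refine Finset.sum_le_sum fun i _ => ?_
    calc normSq ((B i).mulVec (x i)) ≤ (1 + ripConst (B i) (σ i)) * normSq (x i) :=
          (ripConst_spec (B i) (σ i) (hx.2 i)).2
      _ ≤ (1 + δB) * normSq (x i) :=
          mul_le_mul_of_nonneg_right (by linarith [hBle i]) (normSq_nonneg' _)
  have sumB_lo : (1 - δB) * nx ≤ S := by
    rw [Finset.mul_sum]
    refine Finset.sum_le_sum fun i _ => ?_
    calc (1 - δB) * normSq (x i) ≤ (1 - ripConst (B i) (σ i)) * normSq (x i) :=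
          mul_le_mul_of_nonneg_right (by linarith [hBle i]) (normSq_nonneg' _)
      _ ≤ normSq ((B i).mulVec (x i)) := (ripConst_spec (B i) (σ i) (hx.2 i)).1
  constructor
  · -- lower bound
    rcases le_or_gt δA 1 with h1 | h1
    · nlinarith [mul_nonneg hA0 hB0, mul_nonneg (mul_nonneg hA0 hB0) hnx,
        mul_le_mul_of_nonneg_left sumB_lo (by linarith : (0:ℝ) ≤ 1 - δA)]
    · have hHx := normSq_nonneg' (hierOp A B x)
      have : (1 - c) * nx ≤ 0 := by
        apply mul_nonpos_of_nonpos_of_nonneg _ hnx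
        nlinarith [mul_nonneg hA0 hB0]
      linarith
  · -- upper bound
    nlinarith [mul_le_mul_of_nonneg_left sumB_up (by linarith : (0:ℝ) ≤ 1 + δA)]
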